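/- arXiv:2304.12264 — 2 statements merged into one kernel-verified Lean document; each statement's English description precedes it below -/
import Mathlib

section
/- Let f : ℝ → ℝ be compactly supported and sufficiently regular (e.g. continuously differentiable), and suppose its Hilbert transform H[f] is well defined, i.e. for every x ∈ ℝ the principal value (1/π) lim_{ε→0⁺} ∫_{|x−t|>ε} f(t)/(x−t) dt exists and equals H[f](x). Then ∫_ℝ x f(x) H[f](x) dx = (1/(2π)) (∫_ℝ f(x) dx)². -/
/-!
Write `T_ε f x = ∫_{|x - t| > ε} f t / (x - t) dt`. By Fubini and the symmetry `(x, t) ↦ (t, x)` of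
the region `|x - t| > ε`, the identity `x / (x - t) + t / (t - x) = 1` gives
`∫ x f(x) T_ε f(x) dx = ½ ∬_{|x - t| > ε} f(x) f(t)`, which tends to `½ (∫ f)²` because the diagonal
is null. The left side tends to `π ∫ x f(x) H[f](x) dx` by dominated convergence: for `ε ≤ 1`,
`|T_ε f| ≤ 2 Lip(f) + ‖f‖₁`, since on `ε < |x - t| ≤ 1` the odd kernel `1 / (x - t)` integrates to
zero, so `f t` may be replaced there by `f t - f x`.
-/

open MeasureTheory Filter Set Topology
open scoped NNReal

namespace HilbertTransform

noncomputable def truncHilbert (f : ℝ → ℝ) (ε x : ℝ) : ℝ :=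
  ∫ t in {t | ε < |x - t|}, f t / (x - t)

theorem measurableSet_lt_abs_sub (ε x : ℝ) : MeasurableSet {t : ℝ | ε < |x - t|} :=
  measurableSet_lt measurable_const (by fun_prop)

theorem measurableSet_lt_abs_fst_sub_snd (ε : ℝ) : MeasurableSet {p : ℝ × ℝ | ε < |p.1 - p.2|} :=
  measurableSet_lt measurable_const (by fun_prop)

theorem measurableSet_annulus (x ε r : ℝ) :
    MeasurableSet {t : ℝ | ε < |x - t| ∧ |x - t| ≤ r} :=
  (measurableSet_lt_abs_sub ε x).inter
    (measurableSet_le (f := fun t => |x - t|) (by fun_prop) measurable_const)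

theorem setIntegral_inv_sub_annulus_eq_zero (x ε r : ℝ) :
    ∫ t in {t | ε < |x - t| ∧ |x - t| ≤ r}, (x - t)⁻¹ = 0 := by
  set F := {t | ε < |x - t| ∧ |x - t| ≤ r}.indicator fun t => (x - t)⁻¹
  -- the reflection `t ↦ 2x - t` preserves the annulus and flips the sign of the integrand
  have hodd : ∀ t, F (2 * x - t) = -F t := by
    intro t
    have h : x - (2 * x - t) = -(x - t) := by ring
    simp only [F, indicator, mem_ofPred_eq, h, abs_neg, inv_neg]
    split_ifs <;> simp
  have h := integral_sub_left_eq_self F volume (2 * x)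
  simp only [hodd, integral_neg] at h
  rw [← integral_indicator (measurableSet_annulus x ε r)]
  linarith

theorem integrableOn_div_sub {f : ℝ → ℝ} {s : Set ℝ} (hf : IntegrableOn f s) (hs : MeasurableSet s)
    (x : ℝ) {ε : ℝ} (hε : 0 < ε) :
    IntegrableOn (fun t => f t / (x - t)) (s ∩ {t | ε < |x - t|}) := by
  have hmeas : AEStronglyMeasurable (fun t => f t / (x - t)) (volume.restrict s) :=
    (hf.1.aemeasurable.div
      (by fun_prop : Measurable fun t : ℝ => x - t).aemeasurable).aestronglyMeasurable
  refine (IntegrableOn.mono_set (hf.norm.const_mul ε⁻¹) inter_subset_left).mono'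
    (hmeas.mono_measure (Measure.restrict_mono inter_subset_left le_rfl))
    (ae_restrict_of_forall_mem (hs.inter (measurableSet_lt_abs_sub ε x)) fun t ht => ?_)
  rw [norm_div, div_eq_inv_mul, Real.norm_eq_abs (x - t)]
  gcongr
  exact ht.2.le

theorem abs_setIntegral_div_sub_annulus_le {f : ℝ → ℝ} {K : ℝ≥0} (hf : LipschitzWith K f)
    (x : ℝ) {ε r : ℝ} (hε : 0 < ε) (hr : 0 ≤ r) :
    |∫ t in {t | ε < |x - t| ∧ |x - t| ≤ r}, f t / (x - t)| ≤ 2 * r * K := by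
  set S := {t | ε < |x - t| ∧ |x - t| ≤ r}
  have hS : S ⊆ Metric.closedBall x r ∩ {t | ε < |x - t|} := fun t ht =>
    ⟨by rw [Metric.mem_closedBall, Real.dist_eq, abs_sub_comm]; exact ht.2, ht.1⟩
  have hint : ∀ g : ℝ → ℝ, Continuous g → IntegrableOn (fun t => g t / (x - t)) S := fun g hg =>
    (integrableOn_div_sub (hg.continuousOn.integrableOn_compact (isCompact_closedBall x r))
      Metric.isClosed_closedBall.measurableSet x hε).mono_set hS
  have hsplit : ∫ t in S, f t / (x - t) =
      (∫ t in S, (f t - f x) / (x - t)) + ∫ t in S, f x / (x - t) := by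
    rw [← integral_add (hint (fun t => f t - f x) (hf.continuous.sub continuous_const))
      (hint (fun _ => f x) continuous_const)]
    simp only [← add_div, sub_add_cancel]
  have hcancel : ∫ t in S, f x / (x - t) = 0 := by
    simp only [div_eq_mul_inv, integral_const_mul]
    exact mul_eq_zero_of_right _ (setIntegral_inv_sub_annulus_eq_zero x ε r)
  have hquot : ∀ t ∈ S, ‖(f t - f x) / (x - t)‖ ≤ K := by
    intro t ht
    have hdist : dist t x = ‖x - t‖ := by rw [Real.dist_eq, Real.norm_eq_abs, abs_sub_comm]
    rw [norm_div, ← dist_eq_norm, ← hdist, div_le_iff₀ (by rw [hdist]; exact hε.trans ht.1)]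
    exact hf.dist_le_mul t x
  have hvol : volume.real S ≤ 2 * r := by
    rw [← Real.volume_real_closedBall hr]
    exact measureReal_mono (hS.trans inter_subset_left) measure_closedBall_lt_top.ne
  calc |∫ t in S, f t / (x - t)| = ‖∫ t in S, (f t - f x) / (x - t)‖ := by
        rw [hsplit, hcancel, add_zero, Real.norm_eq_abs]
    _ ≤ K * volume.real S :=
        norm_setIntegral_le_of_norm_le_const
          ((measure_mono (hS.trans inter_subset_left)).trans_lt measure_closedBall_lt_top) hquot
    _ ≤ 2 * r * K := by rw [mul_comm]; gcongr

theorem abs_setIntegral_div_sub_far_le {f : ℝ → ℝ} (hf : Integrable f) (x : ℝ) {r : ℝ}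
    (hr : 0 < r) : |∫ t in {t | r < |x - t|}, f t / (x - t)| ≤ r⁻¹ * ∫ t, |f t| := by
  have hbound : ∀ t ∈ {t | r < |x - t|}, ‖f t / (x - t)‖ ≤ r⁻¹ * |f t| := by
    intro t ht
    rw [norm_div, Real.norm_eq_abs, Real.norm_eq_abs, div_eq_inv_mul]
    gcongr
    exact ht.le
  calc |∫ t in {t | r < |x - t|}, f t / (x - t)|
      ≤ ∫ t in {t | r < |x - t|}, r⁻¹ * |f t| :=
        norm_integral_le_of_norm_le (hf.abs.const_mul _).integrableOn
          (ae_restrict_of_forall_mem (measurableSet_lt_abs_sub r x) hbound)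
    _ ≤ ∫ t, r⁻¹ * |f t| :=
        setIntegral_le_integral (hf.abs.const_mul _) (ae_of_all _ fun t => by positivity)
    _ = r⁻¹ * ∫ t, |f t| := integral_const_mul _ _

theorem abs_truncHilbert_le {f : ℝ → ℝ} {K : ℝ≥0} (hf : LipschitzWith K f) (hfi : Integrable f)
    (x : ℝ) {ε r : ℝ} (hε : 0 < ε) (hεr : ε ≤ r) :
    |truncHilbert f ε x| ≤ 2 * r * K + r⁻¹ * ∫ t, |f t| := by
  have hunion : {t | ε < |x - t|} = {t | ε < |x - t| ∧ |x - t| ≤ r} ∪ {t | r < |x - t|} := by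
    ext t
    simp only [mem_union, mem_ofPred_eq]
    constructor
    · intro h
      exact (le_or_gt |x - t| r).imp (fun h' => ⟨h, h'⟩) id
    · rintro (h | h)
      exacts [h.1, hεr.trans_lt h]
  have hdisj : Disjoint {t | ε < |x - t| ∧ |x - t| ≤ r} {t | r < |x - t|} :=
    disjoint_left.2 fun t h h' => (not_lt.2 h.2) h'
  have hint := integrableOn_div_sub (integrableOn_univ.2 hfi) MeasurableSet.univ x hε
  rw [univ_inter, hunion] at hint
  rw [truncHilbert, hunion, setIntegral_union hdisj (measurableSet_lt_abs_sub r x)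
    (hint.mono_set subset_union_left) (hint.mono_set subset_union_right)]
  exact (abs_add_le _ _).trans (add_le_add
    (abs_setIntegral_div_sub_annulus_le hf x hε (hε.le.trans hεr))
    (abs_setIntegral_div_sub_far_le hfi x (hε.trans_le hεr)))

theorem truncHilbert_eq_integral_indicator (f : ℝ → ℝ) (ε x : ℝ) :
    truncHilbert f ε x =
      ∫ t, {p : ℝ × ℝ | ε < |p.1 - p.2|}.indicator (fun p => f p.2 / (p.1 - p.2)) (x, t) := by
  rw [truncHilbert, ← integral_indicator (measurableSet_lt_abs_sub ε x)]
  rfl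

theorem stronglyMeasurable_truncHilbert {f : ℝ → ℝ} (hf : Measurable f) (ε : ℝ) :
    StronglyMeasurable (truncHilbert f ε) := by
  rw [funext (truncHilbert_eq_integral_indicator f ε)]
  refine StronglyMeasurable.integral_prod_right (f := fun x t =>
    {p : ℝ × ℝ | ε < |p.1 - p.2|}.indicator (fun p => f p.2 / (p.1 - p.2)) (x, t)) ?_
  exact (Measurable.indicator (by fun_prop)
    (measurableSet_lt_abs_fst_sub_snd ε)).stronglyMeasurable

theorem tendsto_integral_mul_truncHilbert {f w h : ℝ → ℝ} {K : ℝ≥0} (hf : LipschitzWith K f)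
    (hfi : Integrable f) (hw : Integrable w)
    (hlim : ∀ x, Tendsto (fun ε => truncHilbert f ε x) (𝓝[>] 0) (𝓝 (h x))) :
    Tendsto (fun ε => ∫ x, w x * truncHilbert f ε x) (𝓝[>] 0) (𝓝 (∫ x, w x * h x)) := by
  refine tendsto_integral_filter_of_dominated_convergence (fun x => ‖w x‖ * (2 * K + ∫ t, |f t|))
    (Eventually.of_forall fun ε =>
      hw.1.mul (stronglyMeasurable_truncHilbert hf.continuous.measurable ε).aestronglyMeasurable)
    ?_ (hw.norm.mul_const _) (ae_of_all _ fun x => (hlim x).const_mul (w x))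
  filter_upwards [Ioc_mem_nhdsGT one_pos] with ε hε
  refine ae_of_all _ fun x => ?_
  rw [norm_mul, Real.norm_eq_abs (truncHilbert f ε x)]
  gcongr
  simpa using abs_truncHilbert_le hf hfi x hε.1 hε.2

theorem integrableOn_mul_div_fst_sub_snd {f w : ℝ → ℝ} (hf : Integrable f) (hw : Integrable w)
    {ε : ℝ} (hε : 0 < ε) :
    IntegrableOn (fun p : ℝ × ℝ => w p.1 * (f p.2 / (p.1 - p.2))) {p | ε < |p.1 - p.2|} := by
  have hmeas : AEStronglyMeasurable (fun p : ℝ × ℝ => w p.1 * (f p.2 / (p.1 - p.2))) :=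
    (hw.1.aemeasurable.comp_fst.mul (hf.1.aemeasurable.comp_snd.div
      (by fun_prop : Measurable fun p : ℝ × ℝ => p.1 - p.2).aemeasurable)).aestronglyMeasurable
  refine ((hw.norm.mul_prod hf.norm).const_mul ε⁻¹).integrableOn.mono' hmeas.restrict
    (ae_restrict_of_forall_mem (measurableSet_lt_abs_fst_sub_snd ε) fun p hp => ?_)
  rw [norm_mul, norm_div, Real.norm_eq_abs (p.1 - p.2), div_eq_inv_mul, mul_left_comm]
  gcongr
  exact hp.le

theorem integral_mul_truncHilbert_eq_setIntegral {f w : ℝ → ℝ} (hf : Integrable f)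
    (hw : Integrable w) {ε : ℝ} (hε : 0 < ε) :
    ∫ x, w x * truncHilbert f ε x =
      ∫ p in {p : ℝ × ℝ | ε < |p.1 - p.2|}, w p.1 * (f p.2 / (p.1 - p.2)) := by
  have hD := measurableSet_lt_abs_fst_sub_snd ε
  rw [← integral_indicator hD, Measure.volume_eq_prod, ← integral_integral (f := fun x t =>
    {p : ℝ × ℝ | ε < |p.1 - p.2|}.indicator (fun p => w p.1 * (f p.2 / (p.1 - p.2))) (x, t))
    ((integrableOn_mul_div_fst_sub_snd hf hw hε).integrable_indicator hD)]
  refine integral_congr_ae (ae_of_all _ fun x => ?_)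
  dsimp only
  rw [truncHilbert_eq_integral_indicator, ← integral_const_mul]
  simp only [indicator_mul_right]

theorem integral_id_mul_mul_truncHilbert {f : ℝ → ℝ} (hf : Integrable f)
    (hxf : Integrable fun x => x * f x) {ε : ℝ} (hε : 0 < ε) :
    ∫ x, x * f x * truncHilbert f ε x =
      2⁻¹ * ∫ p in {p : ℝ × ℝ | ε < |p.1 - p.2|}, f p.1 * f p.2 := by
  rw [integral_mul_truncHilbert_eq_setIntegral hf hxf hε]
  set D := {p : ℝ × ℝ | ε < |p.1 - p.2|}
  set k : ℝ × ℝ → ℝ := fun p => p.1 * f p.1 * (f p.2 / (p.1 - p.2))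
  have hD := measurableSet_lt_abs_fst_sub_snd ε
  have hswapD : Prod.swap ⁻¹' D = D := by
    ext p
    simp only [D, mem_preimage, mem_ofPred_eq, Prod.fst_swap, Prod.snd_swap, abs_sub_comm]
  have hswap : ∫ p in D, k p.swap = ∫ p in D, k p := by
    rw [Measure.volume_eq_prod]
    conv_lhs => rw [← hswapD]
    exact Measure.measurePreserving_swap.setIntegral_preimage_emb
      MeasurableEquiv.prodComm.measurableEmbedding k D
  have hsym : ∀ p ∈ D, k p.swap = f p.1 * f p.2 - k p := by
    intro p hp
    have hne : p.1 - p.2 ≠ 0 := abs_pos.1 (hε.trans hp)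
    have hne' : p.2 - p.1 ≠ 0 := by rw [← neg_sub]; exact neg_ne_zero.2 hne
    simp only [k, Prod.fst_swap, Prod.snd_swap]
    field_simp
    ring
  have hk : IntegrableOn k D := integrableOn_mul_div_fst_sub_snd hf hxf hε
  have hff : IntegrableOn (fun p : ℝ × ℝ => f p.1 * f p.2) D := (hf.mul_prod hf).integrableOn
  have hkD : ∫ p in D, k p = (∫ p in D, f p.1 * f p.2) - ∫ p in D, k p := by
    conv_lhs => rw [← hswap]
    rw [setIntegral_congr_fun hD hsym, integral_sub hff hk]
  linarith

theorem ae_fst_ne_snd {α : Type*} [MeasurableSpace α] [MeasurableEq α] (μ ν : Measure α)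
    [SFinite ν] [NullSingletonClass ν] : ∀ᵐ p ∂μ.prod ν, p.1 ≠ p.2 := by
  simp only [ae_iff, not_not]
  rw [Measure.measure_prod_null (measurableSet_eq_fun measurable_fst measurable_snd)]
  refine Filter.EventuallyEq.of_eq (funext fun x => ?_)
  simp [preimage]

theorem tendsto_setIntegral_lt_abs_fst_sub_snd {E : Type*} [NormedAddCommGroup E]
    [NormedSpace ℝ E] {F : ℝ × ℝ → E} (hF : Integrable F) :
    Tendsto (fun ε => ∫ p in {p : ℝ × ℝ | ε < |p.1 - p.2|}, F p) (𝓝[>] 0) (𝓝 (∫ p, F p)) := by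
  refine AECover.integral_tendsto_of_countably_generated ⟨?_, measurableSet_lt_abs_fst_sub_snd⟩ hF
  filter_upwards [ae_fst_ne_snd volume volume] with p hp
  filter_upwards [Ioo_mem_nhdsGT (abs_pos.2 (sub_ne_zero.2 hp))] with ε hε
  exact hε.2

end HilbertTransform

open HilbertTransform

/-- for a compactly supported, continuously differentiable `f : ℝ → ℝ` whose
Hilbert transform `H[f]` is well defined pointwise as a principal value,
`∫ x f(x) H[f](x) dx = (1/(2π)) (∫ f)²`. -/
theorem hilbert_transform_moment_identity (f Hf : ℝ → ℝ)
    (hsupp : HasCompactSupport f) (hreg : ContDiff ℝ 1 f)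
    (hH : ∀ x : ℝ,
      Tendsto (fun ε : ℝ =>
          (1 / Real.pi) * ∫ t in {t : ℝ | ε < |x - t|}, f t / (x - t))
        (nhdsWithin 0 (Set.Ioi 0)) (nhds (Hf x))) :
    ∫ x : ℝ, x * f x * Hf x = (1 / (2 * Real.pi)) * (∫ x : ℝ, f x) ^ 2 := by
  obtain ⟨K, hK⟩ := ContDiff.lipschitzWith_of_hasCompactSupport hsupp hreg one_ne_zero
  have hf : Integrable f := hreg.continuous.integrable_of_hasCompactSupport hsupp
  have hxf : Integrable fun x => x * f x :=
    (continuous_id.mul hreg.continuous).integrable_of_hasCompactSupport hsupp.mul_left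
  have hlim : ∀ x, Tendsto (fun ε => truncHilbert f ε x) (𝓝[>] 0) (𝓝 (Real.pi * Hf x)) := by
    intro x
    simpa [truncHilbert, ← mul_assoc, Real.pi_ne_zero] using (hH x).const_mul Real.pi
  have hleft := tendsto_integral_mul_truncHilbert hK hf hxf hlim
  have hright : Tendsto (fun ε => ∫ x, x * f x * truncHilbert f ε x) (𝓝[>] 0)
      (𝓝 (2⁻¹ * (∫ x, f x) ^ 2)) := by
    rw [sq, ← integral_prod_mul, ← Measure.volume_eq_prod]
    refine ((tendsto_setIntegral_lt_abs_fst_sub_snd (hf.mul_prod hf)).const_mul 2⁻¹).congr' ?_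
    filter_upwards [self_mem_nhdsWithin] with ε hε
    exact (integral_id_mul_mul_truncHilbert hf hxf hε).symm
  have hmoment := tendsto_nhds_unique hleft hright
  simp only [mul_left_comm _ Real.pi, integral_const_mul] at hmoment
  field_simp
  linarith
end

section
/- Let f : ℝ → ℝ be compactly supported and sufficiently regular (e.g. continuously differentiable), with ∫ |f(x)/x| dx < ∞, and suppose its Hilbert transform H[f] is well defined, i.e. for every x ∈ ℝ the principal value (1/π) lim_{ε→0⁺} ∫_{|x−t|>ε} f(t)/(x−t) dt exists and equals H[f](x). Then ∫_ℝ (H[f](x)/x) f(x) dx = −(1/(2π)) (∫_ℝ f(x)/x dx)². -/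
/-!
For `ε > 0` the double integral of `f x f t / (x (x - t))` over `|x - t| > ε` converges
absolutely, and averaging it with its image under `(x, t) ↦ (t, x)` replaces the kernel by
`(1/x - 1/t) / (x - t) = -1 / (x t)`. Hence `∫ (f x / x) H_ε f x` equals
`-½ ∬_{|x - t| > ε} f x f t / (x t)`, which tends to `-½ (∫ f x / x)²` as `ε → 0`.
The left side tends to `π ∫ (f x / x) H f x` by dominated convergence, since `H_ε f` is bounded
uniformly in `0 < ε ≤ 1` when `f` is Lipschitz and integrable: on a symmetric annulus around `x`
the odd kernel `1 / (x - t)` integrates to zero, so only `(f t - f x) / (x - t)` remains there.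
-/

open MeasureTheory Filter Metric Set
open scoped NNReal Topology

/-- `π` times the truncated Hilbert transform `H_ε f x`. -/
noncomputable def truncatedHilbert (f : ℝ → ℝ) (ε x : ℝ) : ℝ :=
  ∫ t in (closedBall x ε)ᶜ, f t / (x - t)

lemma setOf_lt_abs_sub_eq_compl_closedBall (ε x : ℝ) :
    {t : ℝ | ε < |x - t|} = (closedBall x ε)ᶜ := by
  ext t
  simp [Real.dist_eq, abs_sub_comm]

lemma abs_div_sub_le_of_notMem_closedBall {ε x t : ℝ} (a : ℝ) (hε : 0 < ε)
    (ht : t ∉ closedBall x ε) : |a / (x - t)| ≤ |a| / ε := by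
  rw [mem_closedBall, Real.dist_eq, abs_sub_comm, not_le] at ht
  rw [abs_div]
  exact div_le_div_of_nonneg_left (abs_nonneg a) hε ht.le

lemma integrableOn_div_sub_compl_closedBall {f : ℝ → ℝ} (hf : Integrable f) {ε : ℝ}
    (hε : 0 < ε) (x : ℝ) : IntegrableOn (fun t => f t / (x - t)) (closedBall x ε)ᶜ := by
  have hmeas : AEStronglyMeasurable (fun t => f t / (x - t)) :=
    (hf.aemeasurable.div (measurable_const.sub measurable_id).aemeasurable).aestronglyMeasurable
  exact Integrable.mono' (hf.norm.div_const ε).restrict hmeas.restrict <|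
    ae_restrict_of_forall_mem measurableSet_closedBall.compl fun t ht =>
      abs_div_sub_le_of_notMem_closedBall _ hε ht

lemma abs_setIntegral_div_sub_compl_closedBall_le {f : ℝ → ℝ} (hf : Integrable f) {ε : ℝ}
    (hε : 0 < ε) (x : ℝ) :
    |∫ t in (closedBall x ε)ᶜ, f t / (x - t)| ≤ (∫ t, |f t|) / ε := by
  rw [← Real.norm_eq_abs]
  calc ‖∫ t in (closedBall x ε)ᶜ, f t / (x - t)‖ ≤ ∫ t in (closedBall x ε)ᶜ, |f t| / ε :=
        norm_integral_le_of_norm_le (hf.abs.div_const ε).restrict <|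
          ae_restrict_of_forall_mem measurableSet_closedBall.compl fun t ht =>
            abs_div_sub_le_of_notMem_closedBall _ hε ht
    _ ≤ ∫ t, |f t| / ε :=
        setIntegral_le_integral (hf.abs.div_const ε) (.of_forall fun t => by positivity)
    _ = (∫ t, |f t|) / ε := integral_div _ _

lemma Function.Odd.integral_eq_zero {G E : Type*} [MeasurableSpace G] [AddGroup G]
    [MeasurableNeg G] [NormedAddCommGroup E] [NormedSpace ℝ E]
    {μ : Measure G} [μ.IsNegInvariant] {g : G → E} (hg : g.Odd) : ∫ t, g t ∂μ = 0 := by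
  have h := integral_neg_eq_self g μ
  rw [funext hg, integral_neg] at h
  have h2 : (2 : ℝ) • ∫ t, g t ∂μ = 0 := by rw [two_smul]; nth_rw 1 [← h]; exact neg_add_cancel _
  exact (smul_eq_zero.mp h2).resolve_left two_ne_zero

lemma setIntegral_inv_sub_annulus_eq_zero (x ε R : ℝ) :
    ∫ t in closedBall x R \ closedBall x ε, (x - t)⁻¹ = 0 := by
  set φ := (closedBall 0 R \ closedBall 0 ε).indicator fun u : ℝ => u⁻¹
  have hφ : φ.Odd := fun u => by
    simp only [φ, indicator, Set.mem_sdiff, mem_closedBall, dist_zero_right, norm_neg, inv_neg]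
    split_ifs <;> simp
  rw [← integral_indicator (measurableSet_closedBall.diff measurableSet_closedBall),
    ← hφ.integral_eq_zero (μ := volume), ← integral_sub_left_eq_self φ volume x]
  congr 1 with t
  unfold φ indicator
  simp [Real.dist_eq, abs_sub_comm]

lemma abs_setIntegral_div_sub_annulus_le {f : ℝ → ℝ} {L : ℝ≥0} (hL : LipschitzWith L f)
    {ε R : ℝ} (hε : 0 < ε) (hR : 0 ≤ R) (x : ℝ) :
    |∫ t in closedBall x R \ closedBall x ε, f t / (x - t)| ≤ 2 * R * L := by
  set A := closedBall x R \ closedBall x ε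
  have hA : MeasurableSet A := measurableSet_closedBall.diff measurableSet_closedBall
  have hAvol : volume A < ⊤ :=
    (measure_mono sdiff_subset).trans_lt measure_closedBall_lt_top
  have hAvol_le : volume.real A ≤ 2 * R := by
    calc volume.real A ≤ volume.real (closedBall x R) :=
          measureReal_mono sdiff_subset measure_closedBall_lt_top.ne
      _ = 2 * R := by
          rw [measureReal_def, Real.volume_closedBall, ENNReal.toReal_ofReal (by positivity)]
  have hf : Measurable f := hL.continuous.measurable
  have hdiff_le : ∀ t ∈ A, ‖(f t - f x) / (x - t)‖ ≤ L := fun t ht => by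
    have hpos : 0 < |x - t| := by
      have := ht.2
      rw [mem_closedBall, Real.dist_eq, abs_sub_comm, not_le] at this
      exact hε.trans this
    rw [Real.norm_eq_abs, abs_div, div_le_iff₀ hpos, ← Real.dist_eq, ← Real.dist_eq, dist_comm x t]
    exact hL.dist_le_mul t x
  have hdiff_int : IntegrableOn (fun t => (f t - f x) / (x - t)) A :=
    Measure.integrableOn_of_bounded hAvol.ne (by fun_prop : Measurable _).aestronglyMeasurable <|
      ae_restrict_of_forall_mem hA hdiff_le
  have hinv_int : IntegrableOn (fun t => f x * (x - t)⁻¹) A :=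
    Measure.integrableOn_of_bounded hAvol.ne (by fun_prop : Measurable _).aestronglyMeasurable <|
      ae_restrict_of_forall_mem hA fun t ht => by
        simpa [div_eq_mul_inv] using abs_div_sub_le_of_notMem_closedBall (f x) hε ht.2
  have hsplit : ∫ t in A, f t / (x - t) = ∫ t in A, (f t - f x) / (x - t) := by
    calc ∫ t in A, f t / (x - t)
        = ∫ t in A, ((f t - f x) / (x - t) + f x * (x - t)⁻¹) := by
          congr 1; funext t; ring
      _ = ∫ t in A, (f t - f x) / (x - t) := by
          rw [integral_add hdiff_int hinv_int, integral_const_mul,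
            setIntegral_inv_sub_annulus_eq_zero, mul_zero, add_zero]
  rw [hsplit, ← Real.norm_eq_abs]
  calc _ ≤ L * volume.real A := norm_setIntegral_le_of_norm_le_const hAvol hdiff_le
    _ ≤ L * (2 * R) := by gcongr
    _ = 2 * R * L := by ring

lemma abs_truncatedHilbert_le {f : ℝ → ℝ} {L : ℝ≥0} (hL : LipschitzWith L f)
    (hf : Integrable f) {ε : ℝ} (hε : 0 < ε) (hε₁ : ε ≤ 1) (x : ℝ) :
    |truncatedHilbert f ε x| ≤ 2 * L + ∫ t, |f t| := by
  have hsplit : (closedBall x ε)ᶜ = (closedBall x 1 \ closedBall x ε) ∪ (closedBall x 1)ᶜ := by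
    have hsub : closedBall x ε ⊆ closedBall x 1 := closedBall_subset_closedBall hε₁
    ext t
    have := @hsub t
    simp only [mem_compl_iff, mem_union, Set.mem_sdiff]
    tauto
  have hint := integrableOn_div_sub_compl_closedBall hf hε x
  rw [truncatedHilbert, hsplit, setIntegral_union (disjoint_compl_right.mono_left sdiff_subset)
      measurableSet_closedBall.compl (hint.mono_set (hsplit ▸ subset_union_left))
      (hint.mono_set (hsplit ▸ subset_union_right))]
  calc _ ≤ _ := abs_add_le _ _
    _ ≤ 2 * 1 * L + (∫ t, |f t|) / 1 := add_le_add
        (abs_setIntegral_div_sub_annulus_le hL hε zero_le_one x)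
        (abs_setIntegral_div_sub_compl_closedBall_le hf one_pos x)
    _ = 2 * L + ∫ t, |f t| := by ring

lemma measurableSet_lt_abs_sub (ε : ℝ) : MeasurableSet {p : ℝ × ℝ | ε < |p.1 - p.2|} :=
  measurableSet_lt measurable_const (by fun_prop)

lemma indicator_lt_abs_sub_apply {E : Type*} [Zero E] (g : ℝ × ℝ → E) (ε x t : ℝ) :
    {p : ℝ × ℝ | ε < |p.1 - p.2|}.indicator g (x, t)
      = (closedBall x ε)ᶜ.indicator (fun t => g (x, t)) t := by
  simp [indicator, Real.dist_eq, abs_sub_comm]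

lemma truncatedHilbert_eq_integral_indicator (f : ℝ → ℝ) (ε x : ℝ) :
    truncatedHilbert f ε x
      = ∫ t, {p : ℝ × ℝ | ε < |p.1 - p.2|}.indicator (fun p => f p.2 / (p.1 - p.2)) (x, t) := by
  simp only [indicator_lt_abs_sub_apply, truncatedHilbert,
    integral_indicator measurableSet_closedBall.compl]

lemma aestronglyMeasurable_truncatedHilbert {f : ℝ → ℝ} (hf : AEStronglyMeasurable f)
    (ε : ℝ) : AEStronglyMeasurable (truncatedHilbert f ε) := by
  simp only [funext (truncatedHilbert_eq_integral_indicator f ε)]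
  refine AEStronglyMeasurable.integral_prod_right' (f := fun p : ℝ × ℝ => _) ?_
  exact ((hf.comp_snd.aemeasurable.div (measurable_fst.sub measurable_snd).aemeasurable)
    |>.aestronglyMeasurable).indicator (measurableSet_lt_abs_sub ε)

lemma integrable_indicator_lt_abs_sub_mul_div_sub {u f : ℝ → ℝ} (hu : Integrable u)
    (hf : Integrable f) {ε : ℝ} (hε : 0 < ε) :
    Integrable ({p : ℝ × ℝ | ε < |p.1 - p.2|}.indicator
      fun p => u p.1 * (f p.2 / (p.1 - p.2))) := by
  rw [Measure.volume_eq_prod]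
  refine Integrable.mono' (hu.norm.mul_prod (hf.norm.div_const ε)) ?_ (.of_forall fun p => ?_)
  · exact ((hu.1.comp_fst.aemeasurable.mul (hf.1.comp_snd.aemeasurable.div
      (measurable_fst.sub measurable_snd).aemeasurable)).aestronglyMeasurable).indicator
      (measurableSet_lt_abs_sub ε)
  · rw [indicator_lt_abs_sub_apply]
    by_cases hp : p.2 ∈ (closedBall p.1 ε)ᶜ
    · rw [indicator_of_mem hp, norm_mul]
      exact mul_le_mul_of_nonneg_left (abs_div_sub_le_of_notMem_closedBall _ hε hp) (norm_nonneg _)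
    · rw [indicator_of_notMem hp, norm_zero]
      positivity

lemma integral_mul_truncatedHilbert_eq_integral_prod {u f : ℝ → ℝ} (hu : Integrable u)
    (hf : Integrable f) {ε : ℝ} (hε : 0 < ε) :
    ∫ x, u x * truncatedHilbert f ε x
      = ∫ p : ℝ × ℝ, {p : ℝ × ℝ | ε < |p.1 - p.2|}.indicator
          (fun p => u p.1 * (f p.2 / (p.1 - p.2))) p := by
  have hK := integrable_indicator_lt_abs_sub_mul_div_sub hu hf hε
  rw [Measure.volume_eq_prod] at hK ⊢
  rw [integral_prod _ hK]
  congr 1 with x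
  simp only [truncatedHilbert_eq_integral_indicator, indicator_lt_abs_sub_apply,
    ← integral_const_mul, indicator_mul_right]

lemma integral_div_mul_truncatedHilbert {f : ℝ → ℝ} (hf : Integrable f)
    (hf_div : Integrable fun x => f x / x) {ε : ℝ} (hε : 0 < ε) :
    ∫ x, f x / x * truncatedHilbert f ε x
      = -(1 / 2) * ∫ p : ℝ × ℝ, {p : ℝ × ℝ | ε < |p.1 - p.2|}.indicator
          (fun p => f p.1 / p.1 * (f p.2 / p.2)) p := by
  set S := {p : ℝ × ℝ | ε < |p.1 - p.2|}
  set K := S.indicator fun p => f p.1 / p.1 * (f p.2 / (p.1 - p.2))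
  have hK : Integrable K := integrable_indicator_lt_abs_sub_mul_div_sub hf_div hf hε
  have hK_swap : Integrable fun p : ℝ × ℝ => K p.swap := by
    rw [Measure.volume_eq_prod] at hK ⊢; exact hK.swap
  have hswap : ∫ p : ℝ × ℝ, K p.swap = ∫ p, K p := by
    rw [Measure.volume_eq_prod]; exact integral_prod_swap K
  have hS_swap : ∀ p : ℝ × ℝ, p.swap ∈ S ↔ p ∈ S := fun p => by
    simp only [S, mem_ofPred_eq, Prod.fst_swap, Prod.snd_swap, abs_sub_comm]
  have hfst : ∀ᵐ p : ℝ × ℝ, p.1 ≠ 0 :=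
    Measure.quasiMeasurePreserving_fst.ae (Measure.ae_ne volume 0)
  have hsnd : ∀ᵐ p : ℝ × ℝ, p.2 ≠ 0 :=
    Measure.quasiMeasurePreserving_snd.ae (Measure.ae_ne volume 0)
  have hsym : (fun p : ℝ × ℝ => K p + K p.swap)
      =ᵐ[volume] fun p => -S.indicator (fun p => f p.1 / p.1 * (f p.2 / p.2)) p := by
    filter_upwards [hfst, hsnd] with p hx hy
    by_cases hp : p ∈ S
    · have hxy : p.1 - p.2 ≠ 0 := fun h => by
        simp only [S, mem_ofPred_eq, h, abs_zero] at hp; linarith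
      have hyx : p.2 - p.1 ≠ 0 := fun h => hxy (by linarith)
      simp only [K, indicator_of_mem hp, indicator_of_mem ((hS_swap p).mpr hp),
        Prod.fst_swap, Prod.snd_swap]
      field_simp
      ring
    · simp [K, hp, hS_swap]
  calc ∫ x, f x / x * truncatedHilbert f ε x = ∫ p, K p :=
        integral_mul_truncatedHilbert_eq_integral_prod hf_div hf hε
    _ = (1 / 2) * ∫ p : ℝ × ℝ, (K p + K p.swap) := by
        rw [integral_add hK hK_swap, hswap]; ring
    _ = _ := by rw [integral_congr_ae hsym, integral_neg]; ring

lemma tendsto_integral_indicator_lt_abs_sub {E : Type*} [NormedAddCommGroup E] [NormedSpace ℝ E]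
    {F : ℝ × ℝ → E} (hF : Integrable F) :
    Tendsto (fun ε => ∫ p, {p : ℝ × ℝ | ε < |p.1 - p.2|}.indicator F p) (𝓝[>] 0)
      (𝓝 (∫ p, F p)) := by
  have hdiag : ∀ᵐ p : ℝ × ℝ, p.1 ≠ p.2 := by
    have h : ∀ᵐ x : ℝ, ∀ᵐ y : ℝ, (x, y) ∈ {p : ℝ × ℝ | p.1 = p.2}ᶜ :=
      .of_forall fun x => (Measure.ae_ne volume x).mono fun y hy => Ne.symm hy
    exact (Measure.ae_prod_mem_iff_ae_ae_mem
      (measurableSet_eq_fun measurable_fst measurable_snd).compl).mpr h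
  refine tendsto_integral_filter_of_dominated_convergence (‖F ·‖)
    (.of_forall fun ε => hF.1.indicator (measurableSet_lt_abs_sub ε))
    (.of_forall fun ε => .of_forall fun p => norm_indicator_le_norm_self _ _) hF.norm ?_
  filter_upwards [hdiag] with p hp
  refine tendsto_const_nhds.congr' ?_
  filter_upwards [Ioo_mem_nhdsGT (abs_pos.mpr (sub_ne_zero.mpr hp))] with ε hε
  exact (indicator_of_mem (s := {p : ℝ × ℝ | ε < |p.1 - p.2|}) hε.2 F).symm

lemma tendsto_integral_mul_truncatedHilbert {u f H : ℝ → ℝ} {L : ℝ≥0} (hu : Integrable u)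
    (hL : LipschitzWith L f) (hf : Integrable f)
    (hH : ∀ x, Tendsto (fun ε => truncatedHilbert f ε x) (𝓝[>] 0) (𝓝 (H x))) :
    Tendsto (fun ε => ∫ x, u x * truncatedHilbert f ε x) (𝓝[>] 0) (𝓝 (∫ x, u x * H x)) := by
  refine tendsto_integral_filter_of_dominated_convergence (fun x => ‖u x‖ * (2 * L + ∫ t, |f t|))
    (.of_forall fun ε => hu.1.mul (aestronglyMeasurable_truncatedHilbert hf.1 ε)) ?_
    (hu.norm.mul_const _) (.of_forall fun x => (hH x).const_mul (u x))
  filter_upwards [Ioc_mem_nhdsGT one_pos] with ε hε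
  refine .of_forall fun x => ?_
  rw [norm_mul]
  exact mul_le_mul_of_nonneg_left (abs_truncatedHilbert_le hL hf hε.1 hε.2 x) (norm_nonneg _)

/-- for a compactly supported, continuously differentiable `f : ℝ → ℝ` with
`∫ |f(x)/x| dx < ∞` and whose Hilbert transform `H[f]` is well defined pointwise as a
principal value, `∫ (H[f](x)/x) f(x) dx = −(1/(2π)) (∫ f(x)/x dx)²`. -/
theorem hilbert_transform_inverse_moment_identity (f Hf : ℝ → ℝ)
    (hsupp : HasCompactSupport f) (hreg : ContDiff ℝ 1 f)
    (hint : Integrable (fun x : ℝ => f x / x))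
    (hH : ∀ x : ℝ,
      Tendsto (fun ε : ℝ =>
          (1 / Real.pi) * ∫ t in {t : ℝ | ε < |x - t|}, f t / (x - t))
        (nhdsWithin 0 (Set.Ioi 0)) (nhds (Hf x))) :
    ∫ x : ℝ, (Hf x / x) * f x = -(1 / (2 * Real.pi)) * (∫ x : ℝ, f x / x) ^ 2 := by
  have hf : Integrable f := hreg.continuous.integrable_of_hasCompactSupport hsupp
  obtain ⟨L, hL⟩ := hreg.lipschitzWith_of_hasCompactSupport hsupp one_ne_zero
  have hlim : ∀ x, Tendsto (fun ε => truncatedHilbert f ε x) (𝓝[>] 0) (𝓝 (Real.pi * Hf x)) :=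
    fun x => by
      simpa [truncatedHilbert, setOf_lt_abs_sub_eq_compl_closedBall, ← mul_assoc, Real.pi_ne_zero]
        using (hH x).const_mul Real.pi
  have hleft := tendsto_integral_mul_truncatedHilbert hint hL hf hlim
  have hright : Tendsto (fun ε => ∫ x, f x / x * truncatedHilbert f ε x) (𝓝[>] 0)
      (𝓝 (-(1 / 2) * (∫ x, f x / x) ^ 2)) := by
    rw [sq, ← integral_prod_mul, ← Measure.volume_eq_prod]
    refine ((tendsto_integral_indicator_lt_abs_sub (hint.mul_prod hint)).const_mul _).congr' ?_
    filter_upwards [self_mem_nhdsWithin] with ε hε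
    exact (integral_div_mul_truncatedHilbert hf hint hε).symm
  have hkey := tendsto_nhds_unique hleft hright
  calc ∫ x, Hf x / x * f x = Real.pi⁻¹ * ∫ x, f x / x * (Real.pi * Hf x) := by
        rw [← integral_const_mul]
        congr 1 with x
        field_simp
    _ = _ := by
        rw [hkey]
        field_simp
end
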